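/- arXiv:1611.09583 — 7 statements merged into one kernel-verified Lean document; each statement's English description precedes it below -/
import Mathlib

section
/- Let ν₁, ν₂ be complex numbers of modulus 1 and λ ∈ [-1,1] a real number. Then both roots μ of the quadratic equation μ² − (ν₁ − ν₂)λμ − ν₁ν₂ = 0 have modulus 1. -/
/-!
Let `β` be a square root of `ν₁ν₂` and `u = ν₁ / β`. Then `u` lies on the unit circle and
`ν₂ = β ū`, so `ν₁ - ν₂ = β (u - ū) = 2 i β Im u`. Substituting `μ = β z` turns the equation into
`z² - i s z - 1 = 0` with `s = 2 λ Im u ∈ [-2, 2]`. Its imaginary part reads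
`Re z (2 Im z - s) = 0`, and if `Re z = 0` its real part gives `(2 Im z - s)² = s² - 4 ≤ 0`;
either way `Im z = s / 2`, and then the real part is exactly `|z|² = 1`.
-/

open Complex ComplexConjugate

namespace Complex

theorem norm_eq_one_of_sq_sub_ofReal_mul_I_mul_sub_one_eq_zero {z : ℂ} {s : ℝ} (hs : |s| ≤ 2)
    (h : z ^ 2 - s * I * z - 1 = 0) : ‖z‖ = 1 := by
  have hre : z.re ^ 2 - z.im ^ 2 + s * z.im - 1 = 0 := by
    simpa [sq] using congrArg re h
  have him : z.re * (2 * z.im - s) = 0 := by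
    have := congrArg im h
    simp only [sq, sub_im, mul_im, mul_re, ofReal_re, I_re, mul_zero, ofReal_im, I_im, mul_one,
      sub_self, zero_mul, add_zero, zero_add, one_im, sub_zero, zero_im] at this
    linear_combination this
  have hy : 2 * z.im = s := by
    rcases mul_eq_zero.mp him with hx | hy0
    · have hs2 : s ^ 2 ≤ 4 := by nlinarith [abs_nonneg s, sq_abs s]
      rw [hx] at hre
      nlinarith [sq_nonneg (2 * z.im - s)]
    · linarith [hy0]
  have hnormSq : z.re ^ 2 + z.im ^ 2 = 1 := by linear_combination hre + z.im * hy
  rw [norm_def, normSq_apply, ← sq, ← sq, hnormSq, Real.sqrt_one]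

theorem exists_eq_mul_and_eq_mul_conj {ν₁ ν₂ : ℂ} (hν₁ : ‖ν₁‖ = 1) (hν₂ : ‖ν₂‖ = 1) :
    ∃ β u : ℂ, ‖β‖ = 1 ∧ ‖u‖ = 1 ∧ ν₁ = β * u ∧ ν₂ = β * conj u := by
  obtain ⟨β, hβ⟩ := IsAlgClosed.exists_pow_nat_eq (ν₁ * ν₂) two_pos
  have hβ_norm : ‖β‖ = 1 := by
    have h := congrArg norm hβ
    rw [norm_pow, norm_mul, hν₁, hν₂, one_mul] at h
    exact (pow_eq_one_iff_of_nonneg (norm_nonneg β) two_ne_zero).mp h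
  have hβ0 : β ≠ 0 := norm_ne_zero_iff.mp (by simp [hβ_norm])
  have hν₁0 : ν₁ ≠ 0 := norm_ne_zero_iff.mp (by simp [hν₁])
  have hu_norm : ‖ν₁ / β‖ = 1 := by rw [norm_div, hν₁, hβ_norm, div_one]
  refine ⟨β, ν₁ / β, hβ_norm, hu_norm, by field_simp, ?_⟩
  have hconj : conj (ν₁ / β) = β / ν₁ := by
    rw [← inv_div ν₁ β, inv_def, normSq_eq_norm_sq, hu_norm]
    simp
  rw [hconj]
  field_simp
  linear_combination -hβ

end Complex

/-- Let `ν₁, ν₂` be complex numbers of modulus 1 and `λ ∈ [-1,1]` real. Then every root `μ`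
of `μ² − (ν₁ − ν₂)λμ − ν₁ν₂ = 0` has modulus 1. -/
theorem stmt_4 (ν₁ ν₂ : ℂ) (hν₁ : ‖ν₁‖ = 1) (hν₂ : ‖ν₂‖ = 1)
    (lam : ℝ) (hlam : lam ∈ Set.Icc (-1 : ℝ) 1)
    (μ : ℂ) (hμ : μ ^ 2 - (ν₁ - ν₂) * (lam : ℂ) * μ - ν₁ * ν₂ = 0) :
    ‖μ‖ = 1 := by
  obtain ⟨β, u, hβ, hu, rfl, rfl⟩ := exists_eq_mul_and_eq_mul_conj hν₁ hν₂
  have hβ0 : β ≠ 0 := norm_ne_zero_iff.mp (by simp [hβ])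
  have huu : u * conj u = 1 := by rw [mul_conj, normSq_eq_norm_sq, hu]; norm_num
  have hs : |2 * lam * u.im| ≤ 2 := by
    calc |2 * lam * u.im| = 2 * (|lam| * |u.im|) := by rw [abs_mul, abs_mul, abs_two, mul_assoc]
      _ ≤ 2 * (1 * 1) := by
        gcongr
        exacts [abs_le.mpr hlam, hu ▸ abs_im_le_norm u]
      _ = 2 := by norm_num
  have hz : (μ / β) ^ 2 - ((2 * lam * u.im : ℝ) : ℂ) * I * (μ / β) - 1 = 0 := by
    have hsub := sub_conj u
    push_cast at hsub ⊢
    field_simp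
    linear_combination hμ + β * lam * μ * hsub + β ^ 2 * huu
  have := norm_eq_one_of_sq_sub_ofReal_mul_I_mul_sub_one_eq_zero hs hz
  rwa [norm_div, hβ, div_one] at this
end

section
/- Let S be a unitary involution (S² = I) and C a unitary operator on a finite-dimensional Hilbert space. Suppose a is a unit vector with C a = ν₁ a, and set b = S a. If furthermore C b = (ν₁ − ν₂)⟨a,b⟩ a + ν₂ b with λ := ⟨a,b⟩ real, then U := S C satisfies U a = ν₁ b and U b = ν₂ a + (ν₁ − ν₂) λ b; in particular the span of {a, b} is U-invariant. -/
namespace Matrix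

variable {n R : Type*} [Fintype n] [CommRing R]

theorem mul_mulVec_of_mulVec_eq_smul {S C : Matrix n n R} {a : n → R} {ν : R}
    (hCa : C *ᵥ a = ν • a) : (S * C) *ᵥ a = ν • S *ᵥ a := by
  rw [← mulVec_mulVec, hCa, mulVec_smul]

theorem mul_mulVec_mulVec_of_mul_self_eq_one [DecidableEq n] {S C : Matrix n n R} {a : n → R}
    {μ ν : R} (hS2 : S * S = 1) (hCb : C *ᵥ (S *ᵥ a) = μ • a + ν • S *ᵥ a) :
    (S * C) *ᵥ (S *ᵥ a) = ν • a + μ • S *ᵥ a := by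
  rw [← mulVec_mulVec, hCb, mulVec_add, mulVec_smul, mulVec_smul, mulVec_mulVec, hS2,
    one_mulVec, add_comm]

theorem mulVec_mem_span_pair {U : Matrix n n R} {a b : n → R}
    (ha : U *ᵥ a ∈ Submodule.span R {a, b}) (hb : U *ᵥ b ∈ Submodule.span R {a, b})
    {v : n → R} (hv : v ∈ Submodule.span R {a, b}) : U *ᵥ v ∈ Submodule.span R {a, b} :=
  (Submodule.span_le (p := (Submodule.span R {a, b}).comap U.mulVecLin)).mpr
    (Set.pair_subset ha hb) hv

end Matrix

theorem stmt_6_general (N : ℕ) (S C : Matrix (Fin N) (Fin N) ℂ)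
    (hS2 : S * S = 1)
    (ν₁ ν₂ : ℂ)
    (a b : Fin N → ℂ)
    (hCa : C.mulVec a = ν₁ • a) (hb : b = S.mulVec a)
    (lam : ℝ)
    (hCb : C.mulVec b = ((ν₁ - ν₂) * (lam : ℂ)) • a + ν₂ • b) :
    (S * C).mulVec a = ν₁ • b ∧
    (S * C).mulVec b = ν₂ • a + ((ν₁ - ν₂) * (lam : ℂ)) • b ∧
    ∀ v ∈ Submodule.span ℂ ({a, b} : Set (Fin N → ℂ)),
      (S * C).mulVec v ∈ Submodule.span ℂ ({a, b} : Set (Fin N → ℂ)) := by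
  subst hb
  have hUa := Matrix.mul_mulVec_of_mulVec_eq_smul (S := S) hCa
  have hUb := Matrix.mul_mulVec_mulVec_of_mul_self_eq_one hS2 hCb
  refine ⟨hUa, hUb, fun v hv => Matrix.mulVec_mem_span_pair ?_ ?_ hv⟩
  · exact Submodule.mem_span_pair.mpr ⟨0, ν₁, by rw [hUa, zero_smul, zero_add]⟩
  · exact Submodule.mem_span_pair.mpr ⟨ν₂, _, hUb.symm⟩

/-- Invariant-subspace computation: `S` unitary involution, `C` unitary, `a` a unit vector with
`Ca = ν₁ a`, `b = Sa`, `Cb = (ν₁−ν₂)⟨a,b⟩ a + ν₂ b` with `λ = ⟨a,b⟩` real. Then `U = SC`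
satisfies `Ua = ν₁ b`, `Ub = ν₂ a + (ν₁−ν₂)λ b`, and `span{a,b}` is `U`-invariant. -/
theorem stmt_6 (N : ℕ) (S C : Matrix (Fin N) (Fin N) ℂ)
    (hS : S ∈ Matrix.unitaryGroup (Fin N) ℂ) (hS2 : S * S = 1)
    (hC : C ∈ Matrix.unitaryGroup (Fin N) ℂ)
    (ν₁ ν₂ : ℂ) (hν₁ : ‖ν₁‖ = 1) (hν₂ : ‖ν₂‖ = 1)
    (a b : Fin N → ℂ) (ha : dotProduct (star a) a = 1)
    (hCa : C.mulVec a = ν₁ • a) (hb : b = S.mulVec a)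
    (lam : ℝ) (hlam : (lam : ℂ) = dotProduct (star a) b)
    (hCb : C.mulVec b = ((ν₁ - ν₂) * (lam : ℂ)) • a + ν₂ • b) :
    (S * C).mulVec a = ν₁ • b ∧
    (S * C).mulVec b = ν₂ • a + ((ν₁ - ν₂) * (lam : ℂ)) • b ∧
    ∀ v ∈ Submodule.span ℂ ({a, b} : Set (Fin N → ℂ)),
      (S * C).mulVec v ∈ Submodule.span ℂ ({a, b} : Set (Fin N → ℂ)) :=
  stmt_6_general N S C hS2 ν₁ ν₂ a b hCa hb lam hCb
end

section
/- Let S be a unitary involution, C unitary, a a unit vector with Ca = ν₁a, b = Sa, λ = ⟨a,b⟩ real with λ ≠ ±1, and Cb = (ν₁−ν₂)λa + ν₂b. Then for each root μ of μ² − (ν₁−ν₂)λμ − ν₁ν₂ = 0, the vector u = ν₂a + μb is a nonzero eigenvector of U = SC with eigenvalue μ. -/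
/-!
On `span {a, b}` the involution `S` swaps `a` and `b`, and `C` fixes the line of `a` and maps
`b` to `(ν₁ - ν₂) λ a + ν₂ b`; so `S C (ν₂ a + μ b) = μ ν₂ a + (ν₁ ν₂ + (ν₁ - ν₂) λ μ) b`, which is
`μ (ν₂ a + μ b)` exactly by the quadratic equation. If `ν₂ a + μ b = 0`, pairing it and its
image `ν₂ b + μ a` under `S` with `a` gives `ν₂ + μ λ = 0 = ν₂ λ + μ`, hence `(1 - λ²) ν₂ = 0`.
-/

open Matrix

variable {n R : Type*} [Fintype n] [CommRing R]

theorem mulVec_mulVec_of_involution [DecidableEq n] {S : Matrix n n R} (hS2 : S * S = 1) (a : n → R) :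
    S *ᵥ (S *ᵥ a) = a := by
  rw [mulVec_mulVec, hS2, one_mulVec]

theorem mul_mulVec_smul_add_smul_eq_smul {S C : Matrix n n R} {a b : n → R} {c ν₁ ν₂ μ : R}
    (hSa : S *ᵥ a = b) (hSb : S *ᵥ b = a) (hCa : C *ᵥ a = ν₁ • a)
    (hCb : C *ᵥ b = c • a + ν₂ • b) (hμ : μ ^ 2 - c * μ - ν₁ * ν₂ = 0) :
    (S * C) *ᵥ (ν₂ • a + μ • b) = μ • (ν₂ • a + μ • b) := by
  rw [← mulVec_mulVec]
  simp only [mulVec_add, mulVec_smul, hCa, hCb, hSa, hSb]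
  match_scalars
  · linear_combination -hμ
  · ring

theorem smul_add_smul_ne_zero_of_involution [DecidableEq n] [NoZeroDivisors R] {S : Matrix n n R}
    (hS2 : S * S = 1) {a v : n → R} {l ν₂ μ : R} (hva : v ⬝ᵥ a = 1)
    (hvb : v ⬝ᵥ (S *ᵥ a) = l) (hl1 : l ≠ 1) (hl2 : l ≠ -1) (hν₂ : ν₂ ≠ 0) :
    ν₂ • a + μ • (S *ᵥ a) ≠ 0 := by
  intro h
  have hpair : ν₂ + μ * l = 0 := by
    simpa [dotProduct_add, dotProduct_smul, hva, hvb] using congrArg (v ⬝ᵥ ·) h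
  have hSpair : ν₂ * l + μ = 0 := by
    have hSu := congrArg (S *ᵥ ·) h
    simp only [mulVec_add, mulVec_smul, mulVec_mulVec_of_involution hS2, mulVec_zero] at hSu
    simpa [dotProduct_add, dotProduct_smul, hva, hvb] using congrArg (v ⬝ᵥ ·) hSu
  have hprod : ν₂ * ((1 - l) * (1 + l)) = 0 := by linear_combination hpair - l * hSpair
  refine mul_ne_zero hν₂ (mul_ne_zero (sub_ne_zero.mpr hl1.symm) fun h1 => hl2 ?_) hprod
  linear_combination h1

theorem stmt_8_general (N : ℕ) (S C : Matrix (Fin N) (Fin N) ℂ)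
    (hS2 : S * S = 1)
    (ν₁ ν₂ : ℂ) (hν₂ : ‖ν₂‖ = 1)
    (a b : Fin N → ℂ) (ha : dotProduct (star a) a = 1)
    (hCa : C.mulVec a = ν₁ • a) (hb : b = S.mulVec a)
    (lam : ℝ) (hlam : (lam : ℂ) = dotProduct (star a) b)
    (hlam1 : lam ≠ 1) (hlam2 : lam ≠ -1)
    (hCb : C.mulVec b = ((ν₁ - ν₂) * (lam : ℂ)) • a + ν₂ • b)
    (μ : ℂ) (hμ : μ ^ 2 - (ν₁ - ν₂) * (lam : ℂ) * μ - ν₁ * ν₂ = 0) :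
    ν₂ • a + μ • b ≠ 0 ∧ (S * C).mulVec (ν₂ • a + μ • b) = μ • (ν₂ • a + μ • b) := by
  subst hb
  have hν₂0 : ν₂ ≠ 0 := by rintro rfl; simp at hν₂
  refine ⟨smul_add_smul_ne_zero_of_involution hS2 ha hlam.symm ?_ ?_ hν₂0, ?_⟩
  · exact_mod_cast hlam1
  · exact_mod_cast hlam2
  · exact mul_mulVec_smul_add_smul_eq_smul rfl (mulVec_mulVec_of_involution hS2 a) hCa hCb hμ

/-- If `λ = ⟨a,b⟩` is real with `λ ≠ ±1`, then for each root `μ` of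
`μ² − (ν₁−ν₂)λμ − ν₁ν₂ = 0`, the vector `u = ν₂ a + μ b` is a nonzero eigenvector of
`U = SC` with eigenvalue `μ`. -/
theorem stmt_8 (N : ℕ) (S C : Matrix (Fin N) (Fin N) ℂ)
    (hS : S ∈ Matrix.unitaryGroup (Fin N) ℂ) (hS2 : S * S = 1)
    (hC : C ∈ Matrix.unitaryGroup (Fin N) ℂ)
    (ν₁ ν₂ : ℂ) (hν₁ : ‖ν₁‖ = 1) (hν₂ : ‖ν₂‖ = 1)
    (a b : Fin N → ℂ) (ha : dotProduct (star a) a = 1)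
    (hCa : C.mulVec a = ν₁ • a) (hb : b = S.mulVec a)
    (lam : ℝ) (hlam : (lam : ℂ) = dotProduct (star a) b)
    (hlam1 : lam ≠ 1) (hlam2 : lam ≠ -1)
    (hCb : C.mulVec b = ((ν₁ - ν₂) * (lam : ℂ)) • a + ν₂ • b)
    (μ : ℂ) (hμ : μ ^ 2 - (ν₁ - ν₂) * (lam : ℂ) * μ - ν₁ * ν₂ = 0) :
    ν₂ • a + μ • b ≠ 0 ∧ (S * C).mulVec (ν₂ • a + μ • b) = μ • (ν₂ • a + μ • b) :=
  stmt_8_general N S C hS2 ν₁ ν₂ hν₂ a b ha hCa hb lam hlam hlam1 hlam2 hCb μ hμ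
end

section
/- Let n ≥ 2 and let J be the n×n matrix with entries J_{i,i+1 mod n} = conj(r_i)·l_{i+1 mod n} and J_{i+1 mod n,i} = conj over the previous entry (i.e. J is Hermitian), all other entries 0, where for each i, (l_i, r_i) ∈ ℂ² is a unit vector (|l_i|² + |r_i|² = 1). Then every eigenvalue of J is real and lies in the interval [−1, 1]. -/
/-! The eigenvalues of the Hermitian matrix `J` are real, and each one is the Rayleigh quotient
`v* J v` of a unit eigenvector `v`. Writing `a i = ‖r i‖ ‖v i‖` and `b i = ‖l i‖ ‖v i‖`, the entries
of `J` give `|v* J v| ≤ 2 ∑ a i b (i + 1)`, and AM-GM along the cycle bounds this by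
`∑ (a i ^ 2 + b i ^ 2) = ∑ (‖l i‖ ^ 2 + ‖r i‖ ^ 2) ‖v i‖ ^ 2 = 1`. -/

open Finset Matrix

theorem Matrix.norm_star_dotProduct_mulVec_le {ι 𝕜 : Type*} [Fintype ι] [RCLike 𝕜]
    (A : Matrix ι ι 𝕜) (v : ι → 𝕜) :
    ‖star v ⬝ᵥ A *ᵥ v‖ ≤ ∑ i, ∑ j, ‖v i‖ * ‖A i j‖ * ‖v j‖ := by
  simp only [dotProduct, mulVec, Finset.mul_sum]
  refine (norm_sum_le _ _).trans (sum_le_sum fun i _ => (norm_sum_le _ _).trans ?_)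
  refine sum_le_sum fun j _ => le_of_eq ?_
  simp only [Pi.star_apply, norm_mul, norm_star, mul_assoc]

theorem Matrix.IsHermitian.abs_eigenvalues_le {ι 𝕜 : Type*} [Fintype ι] [DecidableEq ι]
    [RCLike 𝕜] {A : Matrix ι ι 𝕜} (hA : A.IsHermitian) {c : ℝ}
    (hc : ∀ v : ι → 𝕜, ‖star v ⬝ᵥ A *ᵥ v‖ ≤ c * ∑ i, ‖v i‖ ^ 2) (i : ι) :
    |hA.eigenvalues i| ≤ c := by
  have hunit : ∑ j, ‖hA.eigenvectorBasis i j‖ ^ 2 = 1 := by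
    rw [← EuclideanSpace.norm_sq_eq, hA.eigenvectorBasis.orthonormal.1 i, one_pow]
  calc |hA.eigenvalues i|
        ≤ ‖star ⇑(hA.eigenvectorBasis i) ⬝ᵥ A *ᵥ ⇑(hA.eigenvectorBasis i)‖ := by
          rw [hA.eigenvalues_eq]; exact RCLike.abs_re_le_norm _
    _ ≤ c := by simpa [hunit] using hc (hA.eigenvectorBasis i)

theorem two_mul_sum_mul_add_le {G : Type*} [AddGroup G] [Fintype G] (a b : G → ℝ) (g : G) :
    2 * ∑ i, a i * b (i + g) ≤ ∑ i, a i ^ 2 + ∑ i, b i ^ 2 := by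
  rw [← Equiv.sum_comp (Equiv.addRight g) (fun i => b i ^ 2), mul_sum, ← sum_add_distrib]
  exact sum_le_sum fun i _ => (mul_assoc 2 _ _).symm.trans_le (two_mul_le_add_sq _ _)

section CyclicJacobi

variable {n : ℕ} {l r : ZMod n → ℂ} {J : Matrix (ZMod n) (ZMod n) ℂ}

/-- For `n ≤ 2` both indicators can fire at once; the bound then just overcounts. -/
theorem norm_entry_le_of_cyclic (hherm : J.IsHermitian)
    (hsuper : ∀ i j : ZMod n, j = i + 1 → J i j = (starRingEnd ℂ) (r i) * l j)
    (hzero : ∀ i j : ZMod n, j ≠ i + 1 → i ≠ j + 1 → J i j = 0) (i j : ZMod n) :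
    ‖J i j‖ ≤
      (if j = i + 1 then ‖r i‖ * ‖l j‖ else 0) + (if i = j + 1 then ‖r j‖ * ‖l i‖ else 0) := by
  by_cases hj : j = i + 1
  · rw [if_pos hj, hsuper i j hj, norm_mul, Complex.norm_conj]
    split_ifs <;> simp [mul_nonneg]
  by_cases hi : i = j + 1
  · rw [if_neg hj, if_pos hi, ← hherm.apply, norm_star, hsuper j i hi, norm_mul, Complex.norm_conj,
      zero_add]
  · simp [hzero i j hj hi, hj, hi]

theorem norm_star_dotProduct_mulVec_le_of_cyclic [NeZero n]
    (hunit : ∀ i, ‖l i‖ ^ 2 + ‖r i‖ ^ 2 = 1) (hherm : J.IsHermitian)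
    (hsuper : ∀ i j : ZMod n, j = i + 1 → J i j = (starRingEnd ℂ) (r i) * l j)
    (hzero : ∀ i j : ZMod n, j ≠ i + 1 → i ≠ j + 1 → J i j = 0) (v : ZMod n → ℂ) :
    ‖star v ⬝ᵥ J *ᵥ v‖ ≤ ∑ i, ‖v i‖ ^ 2 := by
  set a : ZMod n → ℝ := fun i => ‖r i‖ * ‖v i‖
  set b : ZMod n → ℝ := fun i => ‖l i‖ * ‖v i‖
  calc ‖star v ⬝ᵥ J *ᵥ v‖ ≤ ∑ i, ∑ j, ‖v i‖ * ‖J i j‖ * ‖v j‖ :=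
        J.norm_star_dotProduct_mulVec_le v
    _ ≤ ∑ i, ∑ j, ((if j = i + 1 then a i * b j else 0) + if i = j + 1 then a j * b i else 0) := by
        refine sum_le_sum fun i _ => sum_le_sum fun j _ => ?_
        have h := mul_le_mul_of_nonneg_right (mul_le_mul_of_nonneg_left
          (norm_entry_le_of_cyclic hherm hsuper hzero i j) (norm_nonneg (v i))) (norm_nonneg (v j))
        convert h using 1
        simp only [a, b]
        split_ifs <;> ring
    _ = 2 * ∑ i, a i * b (i + 1) := by
        simp only [sum_add_distrib, sum_ite_eq', mem_univ, if_true]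
        rw [sum_comm]
        simp only [sum_ite_eq', mem_univ, if_true]
        ring
    _ ≤ ∑ i, a i ^ 2 + ∑ i, b i ^ 2 := two_mul_sum_mul_add_le a b 1
    _ = ∑ i, ‖v i‖ ^ 2 := by
        rw [← sum_add_distrib]
        refine sum_congr rfl fun i _ => ?_
        linear_combination (‖v i‖ ^ 2) * hunit i

end CyclicJacobi

theorem stmt_10_general (n : ℕ) [NeZero n]
    (l r : ZMod n → ℂ)
    (hunit : ∀ i, ‖l i‖ ^ 2 + ‖r i‖ ^ 2 = 1)
    (J : Matrix (ZMod n) (ZMod n) ℂ)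
    (hherm : J.IsHermitian)
    (hsuper : ∀ i j : ZMod n, j = i + 1 → J i j = (starRingEnd ℂ) (r i) * l j)
    (hzero : ∀ i j : ZMod n, j ≠ i + 1 → i ≠ j + 1 → J i j = 0)
    (μ : ℂ) (hμ : μ ∈ spectrum ℂ J) :
    μ.im = 0 ∧ -1 ≤ μ.re ∧ μ.re ≤ 1 := by
  rw [hherm.spectrum_eq_image_range] at hμ
  obtain ⟨_, ⟨i, rfl⟩, rfl⟩ := hμ
  have hbound := hherm.abs_eigenvalues_le (c := 1) (fun v => by
    simpa using norm_star_dotProduct_mulVec_le_of_cyclic hunit hherm hsuper hzero v) i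
  exact ⟨Complex.ofReal_im _, abs_le.mp (by simpa using hbound)⟩

/-- Let `n ≥ 2` and `J` the Hermitian cyclic-tridiagonal matrix with
`J_{i,i+1} = conj(r_i)·l_{i+1}` (indices mod `n`) and all other entries (off the cyclic
super/sub-diagonal) zero, where each `(l_i, r_i)` is a unit vector in `ℂ²`. Then every
eigenvalue of `J` is real and lies in `[−1, 1]`. -/
theorem stmt_10 (n : ℕ) [NeZero n] (hn : 2 ≤ n)
    (l r : ZMod n → ℂ)
    (hunit : ∀ i, ‖l i‖ ^ 2 + ‖r i‖ ^ 2 = 1)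
    (J : Matrix (ZMod n) (ZMod n) ℂ)
    (hherm : J.IsHermitian)
    (hsuper : ∀ i j : ZMod n, j = i + 1 → J i j = (starRingEnd ℂ) (r i) * l j)
    (hzero : ∀ i j : ZMod n, j ≠ i + 1 → i ≠ j + 1 → J i j = 0)
    (μ : ℂ) (hμ : μ ∈ spectrum ℂ J) :
    μ.im = 0 ∧ -1 ≤ μ.re ∧ μ.re ≤ 1 :=
  stmt_10_general n l r hunit J hherm hsuper hzero μ hμ
end

section
/- Let J and J̃ be two n×n Hermitian matrices of the cyclic-tridiagonal form J_{i,i+1 mod n} = conj(r_i) l_{i+1} with |l_i|² + |r_i|² = 1, such that |l_i| = |l̃_i| and |r_i| = |r̃_i| for all i, and the products ∏_{i=0}^{n-1} conj(r_i) l_i and ∏_{i=0}^{n-1} conj(r̃_i) l̃_i have equal real parts. Then J and J̃ have the same characteristic polynomial, hence the same spectrum. -/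
open Matrix Finset ComplexConjugate

/-! Write `a i = conj (r i) * l (i + 1)` for the superdiagonal of a Hermitian cyclic Jacobi matrix.
Conjugating by a diagonal unitary `diag d` replaces `a i` by `conj (d i) * a i * d (i + 1)`, which
keeps every `‖a i‖` and the cycle product `∏ a i`. Conversely, any `b` with `‖b i‖ = ‖a i‖` and the
same cycle product is reached this way: write `b i = w i * a i` with `w i` on the unit circle and
`∏ w = 1`, and solve `d (i + 1) = d i * w i` around the cycle, which closes up because `∏ w = 1`. Transposition
replaces `a` by `conj a` and the cycle product by its conjugate; as `‖∏ a i‖` is fixed by the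
moduli, `Re ∏ a i` determines `∏ a i` up to conjugation, hence the characteristic polynomial. -/

theorem Complex.exists_circle_mul_eq_of_norm_eq {z w : ℂ} (h : ‖z‖ = ‖w‖) :
    ∃ u : Circle, w = u * z := by
  by_cases hz : z = 0
  · exact ⟨1, by simpa [hz, eq_comm] using h⟩
  · refine ⟨⟨w / z, ?_⟩, (div_mul_cancel₀ w hz).symm⟩
    simp [Submonoid.unitSphere, ← h, hz]

theorem Complex.eq_or_eq_conj_of_norm_eq_of_re_eq {z w : ℂ} (hnorm : ‖z‖ = ‖w‖)
    (hre : z.re = w.re) : w = z ∨ w = conj z := by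
  have him : w.im * w.im = z.im * z.im := by
    have := congrArg (· ^ 2) hnorm
    simp only [← Complex.normSq_eq_norm_sq, Complex.normSq_apply, hre] at this
    linarith
  rcases mul_self_eq_mul_self_iff.mp him with h | h
  · exact Or.inl (Complex.ext hre.symm h)
  · exact Or.inr (Complex.ext hre.symm (by simp [h]))

theorem exists_circle_mul_eq_of_prod_eq {ι : Type*} [Fintype ι] [DecidableEq ι] {a b : ι → ℂ}
    (hnorm : ∀ i, ‖a i‖ = ‖b i‖) (hprod : ∏ i, a i = ∏ i, b i) :
    ∃ w : ι → Circle, (∀ i, b i = w i * a i) ∧ ∏ i, w i = 1 := by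
  choose w₀ hw₀ using fun i => Complex.exists_circle_mul_eq_of_norm_eq (hnorm i)
  have hcoe : ((∏ i, w₀ i : Circle) : ℂ) = ∏ i, (w₀ i : ℂ) := map_prod Circle.coeHom _ _
  have hb : ((∏ i, w₀ i : Circle) : ℂ) * ∏ i, b i = ∏ i, b i :=
    calc ((∏ i, w₀ i : Circle) : ℂ) * ∏ i, b i = (∏ i, (w₀ i : ℂ)) * ∏ i, a i := by
          rw [hcoe, hprod]
      _ = ∏ i, b i := by rw [← prod_mul_distrib]; exact prod_congr rfl fun i _ => (hw₀ i).symm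
  rcases mul_left_eq_self₀.mp hb with h | h
  · exact ⟨w₀, hw₀, Circle.coe_eq_one.mp h⟩
  · -- some `a k` vanishes, so `w k` is free and can absorb the product
    obtain ⟨k, -, hk⟩ := prod_eq_zero_iff.mp (hprod.trans h)
    refine ⟨w₀ * Pi.mulSingle k (∏ i, w₀ i)⁻¹, fun i => ?_, ?_⟩
    · by_cases hik : i = k
      · subst hik
        simp [hw₀ i, hk]
      · simp [hw₀ i, hik]
    · simp only [Pi.mul_apply, prod_mul_distrib, Fintype.prod_pi_mulSingle', mul_inv_cancel]

theorem ZMod.prod_range_natCast {M : Type*} [CommMonoid M] (n : ℕ) [NeZero n] (f : ZMod n → M) :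
    ∏ t ∈ range n, f t = ∏ i, f i :=
  prod_nbij' (↑) ZMod.val (by simp) (by simp [ZMod.val_lt])
    (fun _ ht => ZMod.val_cast_of_lt (mem_range.mp ht)) (fun i _ => ZMod.natCast_zmod_val i)
    (fun _ _ => rfl)

theorem ZMod.exists_mul_eq_of_prod_eq_one {G : Type*} [CommGroup G] {n : ℕ} [NeZero n]
    (w : ZMod n → G) (hw : ∏ i, w i = 1) : ∃ d : ZMod n → G, ∀ i, d (i + 1) = d i * w i := by
  refine ⟨fun i => ∏ t ∈ range i.val, w t, fun i => ?_⟩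
  have hi : i + 1 = ((i.val + 1 : ℕ) : ZMod n) := by push_cast [ZMod.natCast_zmod_val]; rfl
  have hsucc : ∏ t ∈ range (i.val + 1), w t = (∏ t ∈ range i.val, w t) * w i := by
    rw [prod_range_succ, ZMod.natCast_zmod_val]
  show ∏ t ∈ range (i + 1).val, w t = (∏ t ∈ range i.val, w t) * w i
  rcases Nat.lt_or_ge (i.val + 1) n with hlt | hge
  · rw [hi, ZMod.val_cast_of_lt hlt, hsucc]
  · have heq : i.val + 1 = n := le_antisymm (ZMod.val_lt i) hge
    rw [hi, heq, ZMod.natCast_self, ZMod.val_zero, prod_range_zero, ← hsucc, heq,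
      ZMod.prod_range_natCast, hw]

theorem Circle.coe_mul_conj (z : Circle) : (z : ℂ) * conj (z : ℂ) = 1 := by
  rw [← Circle.coe_inv_eq_conj, ← Circle.coe_mul, mul_inv_cancel, Circle.coe_one]

theorem Matrix.charpoly_mul_mul_of_mul_eq_one {R ι : Type*} [CommRing R] [Fintype ι]
    [DecidableEq ι] (A P Q : Matrix ι ι R) (h : Q * P = 1) : (P * A * Q).charpoly = A.charpoly := by
  rw [mul_assoc, charpoly_mul_comm, mul_assoc, h, mul_one]

theorem Matrix.spectrum_eq_of_charpoly_eq {K ι : Type*} [Field K] [Fintype ι] [DecidableEq ι]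
    {A B : Matrix ι ι K} (h : A.charpoly = B.charpoly) : spectrum K A = spectrum K B := by
  ext μ
  rw [mem_spectrum_iff_not_isUnit_eval_charpoly, mem_spectrum_iff_not_isUnit_eval_charpoly, h]

structure IsCyclicJacobi {n : ℕ} (A : Matrix (ZMod n) (ZMod n) ℂ) (a : ZMod n → ℂ) : Prop where
  isHermitian : A.IsHermitian
  apply_add_one : ∀ i, A i (i + 1) = a i
  apply_eq_zero : ∀ i j, j ≠ i + 1 → i ≠ j + 1 → A i j = 0

namespace IsCyclicJacobi

variable {n : ℕ} {A B : Matrix (ZMod n) (ZMod n) ℂ} {a b : ZMod n → ℂ}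

theorem apply (hA : IsCyclicJacobi A a) (i j : ZMod n) :
    A i j = if j = i + 1 then a i else if i = j + 1 then conj (a j) else 0 := by
  split_ifs with h₁ h₂
  · rw [h₁, hA.apply_add_one]
  · rw [h₂, ← hA.isHermitian.apply, hA.apply_add_one]; rfl
  · exact hA.apply_eq_zero i j h₁ h₂

theorem transpose (hA : IsCyclicJacobi A a) : IsCyclicJacobi Aᵀ (fun i => conj (a i)) where
  isHermitian := hA.isHermitian.transpose
  apply_add_one i := by rw [transpose_apply, ← hA.isHermitian.apply, hA.apply_add_one]; rfl
  apply_eq_zero i j h₁ h₂ := hA.apply_eq_zero j i h₂ h₁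

variable [NeZero n]

theorem eq_diagonal_mul_mul_diagonal (hA : IsCyclicJacobi A a) (hB : IsCyclicJacobi B b)
    (d : ZMod n → Circle) (hb : ∀ i, b i = conj (d i : ℂ) * a i * d (i + 1)) :
    B = diagonal (fun i => conj (d i : ℂ)) * A * diagonal (fun i => (d i : ℂ)) := by
  ext i j
  rw [mul_diagonal, diagonal_mul, hA.apply, hB.apply]
  split_ifs with h₁ h₂
  · rw [h₁, hb]
  · rw [h₂, hb]; simp only [map_mul, Complex.conj_conj]; ring
  · ring

theorem charpoly_eq_of_prod_eq (hA : IsCyclicJacobi A a) (hB : IsCyclicJacobi B b)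
    (hnorm : ∀ i, ‖a i‖ = ‖b i‖) (hprod : ∏ i, a i = ∏ i, b i) : A.charpoly = B.charpoly := by
  obtain ⟨w, hw, hw_prod⟩ := exists_circle_mul_eq_of_prod_eq hnorm hprod
  obtain ⟨d, hd⟩ := ZMod.exists_mul_eq_of_prod_eq_one w hw_prod
  have hgauge : ∀ i, b i = conj (d i : ℂ) * a i * d (i + 1) := fun i => by
    rw [hw, hd, Circle.coe_mul]
    linear_combination -(w i * a i) * Circle.coe_mul_conj (d i)
  rw [hA.eq_diagonal_mul_mul_diagonal hB d hgauge, charpoly_mul_mul_of_mul_eq_one]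
  rw [diagonal_mul_diagonal, ← diagonal_one]
  congr 1
  ext i
  exact Circle.coe_mul_conj (d i)

theorem charpoly_eq_of_re_prod_eq (hA : IsCyclicJacobi A a) (hB : IsCyclicJacobi B b)
    (hnorm : ∀ i, ‖a i‖ = ‖b i‖) (hre : (∏ i, a i).re = (∏ i, b i).re) :
    A.charpoly = B.charpoly := by
  have hprod_norm : ‖∏ i, a i‖ = ‖∏ i, b i‖ := by simp only [norm_prod, hnorm]
  rcases Complex.eq_or_eq_conj_of_norm_eq_of_re_eq hprod_norm hre with h | h
  · exact hA.charpoly_eq_of_prod_eq hB hnorm h.symm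
  · rw [← charpoly_transpose]
    refine hA.transpose.charpoly_eq_of_prod_eq hB (fun i => by simp [hnorm]) ?_
    rw [h, map_prod]

end IsCyclicJacobi

theorem stmt_11_general (n : ℕ) [NeZero n]
    (l r l' r' : ZMod n → ℂ)
    (J J' : Matrix (ZMod n) (ZMod n) ℂ)
    (hherm : J.IsHermitian) (hherm' : J'.IsHermitian)
    (hsuper : ∀ i j : ZMod n, j = i + 1 → J i j = (starRingEnd ℂ) (r i) * l j)
    (hsuper' : ∀ i j : ZMod n, j = i + 1 → J' i j = (starRingEnd ℂ) (r' i) * l' j)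
    (hzero : ∀ i j : ZMod n, j ≠ i + 1 → i ≠ j + 1 → J i j = 0)
    (hzero' : ∀ i j : ZMod n, j ≠ i + 1 → i ≠ j + 1 → J' i j = 0)
    (habsl : ∀ i, ‖l i‖ = ‖l' i‖)
    (habsr : ∀ i, ‖r i‖ = ‖r' i‖)
    (hre : (∏ i : ZMod n, (starRingEnd ℂ) (r i) * l i).re
            = (∏ i : ZMod n, (starRingEnd ℂ) (r' i) * l' i).re) :
    J.charpoly = J'.charpoly ∧ spectrum ℂ J = spectrum ℂ J' := by
  have hprod : ∀ x y : ZMod n → ℂ, ∏ i, conj (x i) * y (i + 1) = ∏ i, conj (x i) * y i :=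
    fun x y => by
      rw [prod_mul_distrib, prod_mul_distrib,
        Fintype.prod_equiv (Equiv.addRight 1) (fun i => y (i + 1)) y fun _ => rfl]
  have hJ : IsCyclicJacobi J fun i => conj (r i) * l (i + 1) :=
    ⟨hherm, fun i => hsuper i _ rfl, hzero⟩
  have hJ' : IsCyclicJacobi J' fun i => conj (r' i) * l' (i + 1) :=
    ⟨hherm', fun i => hsuper' i _ rfl, hzero'⟩
  have hcharpoly : J.charpoly = J'.charpoly :=
    hJ.charpoly_eq_of_re_prod_eq hJ' (fun i => by simp [habsl, habsr]) (by rw [hprod, hprod, hre])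
  exact ⟨hcharpoly, spectrum_eq_of_charpoly_eq hcharpoly⟩

/-- Two Hermitian cyclic-tridiagonal Jacobi matrices built from unit vectors `(l_i, r_i)` and
`(l̃_i, r̃_i)` with `|l_i| = |l̃_i|`, `|r_i| = |r̃_i|` for all `i` and equal real parts of
`∏ conj(r_i) l_i` have the same characteristic polynomial, hence the same spectrum. -/
theorem stmt_11 (n : ℕ) [NeZero n] (hn : 2 ≤ n)
    (l r l' r' : ZMod n → ℂ)
    (hunit : ∀ i, ‖l i‖ ^ 2 + ‖r i‖ ^ 2 = 1)
    (hunit' : ∀ i, ‖l' i‖ ^ 2 + ‖r' i‖ ^ 2 = 1)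
    (J J' : Matrix (ZMod n) (ZMod n) ℂ)
    (hherm : J.IsHermitian) (hherm' : J'.IsHermitian)
    (hsuper : ∀ i j : ZMod n, j = i + 1 → J i j = (starRingEnd ℂ) (r i) * l j)
    (hsuper' : ∀ i j : ZMod n, j = i + 1 → J' i j = (starRingEnd ℂ) (r' i) * l' j)
    (hzero : ∀ i j : ZMod n, j ≠ i + 1 → i ≠ j + 1 → J i j = 0)
    (hzero' : ∀ i j : ZMod n, j ≠ i + 1 → i ≠ j + 1 → J' i j = 0)
    (habsl : ∀ i, ‖l i‖ = ‖l' i‖)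
    (habsr : ∀ i, ‖r i‖ = ‖r' i‖)
    (hre : (∏ i : ZMod n, (starRingEnd ℂ) (r i) * l i).re
            = (∏ i : ZMod n, (starRingEnd ℂ) (r' i) * l' i).re) :
    J.charpoly = J'.charpoly ∧ spectrum ℂ J = spectrum ℂ J' :=
  stmt_11_general n l r l' r' J J' hherm hherm' hsuper hsuper' hzero hzero' habsl habsr hre
end

section
/- Consider the quantum walk on the cycle C_n (n ≥ 2) with moving shift and coin operator 𝒞 = |0⟩⟨0| ⊗ C + ∑_{i=1}^{n-1} |i⟩⟨i| ⊗ I₂, where C is a 2×2 unitary matrix. Then for every positive integer k, (⟨0| ⊗ I₂) (U^{MS})^{kn} (|0⟩ ⊗ I₂) = C^k, where U^{MS} = S^{MS} 𝒞. -/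
/-- The moving shift on the cycle `C_n`: `S(|i⟩⊗|R⟩) = |i+1⟩⊗|R⟩`,
`S(|i⟩⊗|L⟩) = |i−1⟩⊗|L⟩`, with chirality `L = 0`, `R = 1`. -/
def movingShift (n : ℕ) [NeZero n] : Matrix (ZMod n × Fin 2) (ZMod n × Fin 2) ℂ :=
  fun p q =>
    if p.2 = q.2 ∧ ((q.2 = 1 ∧ p.1 = q.1 + 1) ∨ (q.2 = 0 ∧ p.1 = q.1 - 1)) then 1 else 0

/-- The coin operator `𝒞 = |0⟩⟨0| ⊗ C + ∑_{i≠0} |i⟩⟨i| ⊗ I₂`. -/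
def coinAtOrigin (n : ℕ) [NeZero n] (C : Matrix (Fin 2) (Fin 2) ℂ) :
    Matrix (ZMod n × Fin 2) (ZMod n × Fin 2) ℂ :=
  fun p q =>
    if p.1 = q.1 then (if p.1 = 0 then C p.2 q.2 else if p.2 = q.2 then 1 else 0) else 0

/-!
Start the walk at `|0⟩ ⊗ w`. The first step applies `C` at the origin, after which the
`R`-component moves right and the `L`-component moves left, one site per step. For `0 < m < n`
neither component is at the origin, so the coin acts as the identity, and after exactly `n`
steps both components are back at `0`: `U^n (|0⟩ ⊗ w) = |0⟩ ⊗ C w`. Iterating gives `C^k`.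
-/

open Matrix

namespace MovingShiftWalk

variable {n : ℕ}

def velocity (e : Fin 2) : ZMod n := if e = 1 then 1 else -1

/-- `|m⟩ ⊗ w_R |R⟩ + |−m⟩ ⊗ w_L |L⟩`: the state reached from `|0⟩ ⊗ w` after `m` steps
on which the coin acts trivially. -/
def ballistic (n m : ℕ) (w : Fin 2 → ℂ) : ZMod n × Fin 2 → ℂ :=
  fun p => if p.1 = (m : ZMod n) * velocity p.2 then w p.2 else 0

lemma natCast_mul_velocity_ne_zero {m : ℕ} (hm : (m : ZMod n) ≠ 0) (e : Fin 2) :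
    (m : ZMod n) * velocity e ≠ 0 := by
  unfold velocity; split_ifs <;> simpa using hm

lemma ballistic_zero_single (d : Fin 2) :
    ballistic n 0 (Pi.single d 1) = Pi.single (0, d) 1 := by
  ext ⟨i, e⟩
  by_cases hi : i = 0 <;> simp [ballistic, hi, Pi.single_apply]

lemma ballistic_zero_apply_zero (w : Fin 2 → ℂ) (e : Fin 2) : ballistic n 0 w (0, e) = w e := by
  simp [ballistic]

lemma ballistic_self (w : Fin 2 → ℂ) : ballistic n n w = ballistic n 0 w := by
  unfold ballistic
  rw [ZMod.natCast_self, Nat.cast_zero]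

variable [NeZero n]

lemma movingShift_mulVec_apply (ψ : ZMod n × Fin 2 → ℂ) (i : ZMod n) (e : Fin 2) :
    (movingShift n *ᵥ ψ) (i, e) = ψ (i - velocity e, e) := by
  simp only [mulVec, dotProduct, Fintype.sum_prod_type, Fin.sum_univ_two]
  fin_cases e <;> simp [movingShift, velocity, ← sub_eq_iff_eq_add, eq_sub_iff_add_eq]

lemma coinAtOrigin_mulVec_apply (C : Matrix (Fin 2) (Fin 2) ℂ) (ψ : ZMod n × Fin 2 → ℂ)
    (i : ZMod n) (e : Fin 2) :
    (coinAtOrigin n C *ᵥ ψ) (i, e) =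
      if i = 0 then (C *ᵥ fun f => ψ (0, f)) e else ψ (i, e) := by
  simp only [mulVec, dotProduct, Fintype.sum_prod_type]
  by_cases hi : i = 0 <;> simp [coinAtOrigin, hi, eq_comm]

lemma movingShift_mulVec_ballistic (m : ℕ) (w : Fin 2 → ℂ) :
    movingShift n *ᵥ ballistic n m w = ballistic n (m + 1) w := by
  ext ⟨i, e⟩
  simp only [movingShift_mulVec_apply, ballistic, sub_eq_iff_eq_add]
  push_cast
  ring_nf

lemma coinAtOrigin_mulVec_ballistic_zero (C : Matrix (Fin 2) (Fin 2) ℂ) (w : Fin 2 → ℂ) :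
    coinAtOrigin n C *ᵥ ballistic n 0 w = ballistic n 0 (C *ᵥ w) := by
  ext ⟨i, e⟩
  by_cases hi : i = 0 <;> simp [coinAtOrigin_mulVec_apply, ballistic, hi]

lemma coinAtOrigin_mulVec_ballistic_of_ne_zero (C : Matrix (Fin 2) (Fin 2) ℂ) {m : ℕ}
    (hm : (m : ZMod n) ≠ 0) (w : Fin 2 → ℂ) :
    coinAtOrigin n C *ᵥ ballistic n m w = ballistic n m w := by
  ext ⟨i, e⟩
  rw [coinAtOrigin_mulVec_apply]
  split_ifs with hi
  · subst hi
    simp [ballistic, mulVec, dotProduct, (natCast_mul_velocity_ne_zero hm _).symm]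
  · rfl

lemma walk_mulVec_ballistic_zero (C : Matrix (Fin 2) (Fin 2) ℂ) (w : Fin 2 → ℂ) :
    (movingShift n * coinAtOrigin n C) *ᵥ ballistic n 0 w = ballistic n 1 (C *ᵥ w) := by
  rw [← mulVec_mulVec, coinAtOrigin_mulVec_ballistic_zero, movingShift_mulVec_ballistic]

lemma walk_mulVec_ballistic_of_ne_zero (C : Matrix (Fin 2) (Fin 2) ℂ) {m : ℕ}
    (hm : (m : ZMod n) ≠ 0) (w : Fin 2 → ℂ) :
    (movingShift n * coinAtOrigin n C) *ᵥ ballistic n m w = ballistic n (m + 1) w := by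
  rw [← mulVec_mulVec, coinAtOrigin_mulVec_ballistic_of_ne_zero C hm,
    movingShift_mulVec_ballistic]

lemma walk_pow_mulVec_ballistic_zero (C : Matrix (Fin 2) (Fin 2) ℂ) (w : Fin 2 → ℂ)
    {m : ℕ} (hm : 1 ≤ m) (hmn : m ≤ n) :
    (movingShift n * coinAtOrigin n C) ^ m *ᵥ ballistic n 0 w = ballistic n m (C *ᵥ w) := by
  induction m, hm using Nat.le_induction with
  | base => rw [pow_one, walk_mulVec_ballistic_zero]
  | succ m hm ih =>
    have hm0 : (m : ZMod n) ≠ 0 := by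
      rw [Ne, ZMod.natCast_eq_zero_iff]
      exact fun h => absurd (Nat.le_of_dvd (by omega) h) (by omega)
    rw [pow_succ', ← mulVec_mulVec, ih (by omega), walk_mulVec_ballistic_of_ne_zero C hm0]

lemma walk_pow_self_mulVec_ballistic_zero (C : Matrix (Fin 2) (Fin 2) ℂ) (w : Fin 2 → ℂ) :
    (movingShift n * coinAtOrigin n C) ^ n *ᵥ ballistic n 0 w = ballistic n 0 (C *ᵥ w) := by
  rw [walk_pow_mulVec_ballistic_zero C w NeZero.one_le le_rfl, ballistic_self]

lemma walk_pow_mul_self_mulVec_ballistic_zero (C : Matrix (Fin 2) (Fin 2) ℂ) (k : ℕ)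
    (w : Fin 2 → ℂ) :
    (movingShift n * coinAtOrigin n C) ^ (k * n) *ᵥ ballistic n 0 w =
      ballistic n 0 (C ^ k *ᵥ w) := by
  induction k generalizing w with
  | zero => simp
  | succ k ih =>
    rw [add_one_mul, pow_add, ← mulVec_mulVec, walk_pow_self_mulVec_ballistic_zero, ih,
      mulVec_mulVec, ← pow_succ]

end MovingShiftWalk

open MovingShiftWalk in
theorem stmt_14_general (n : ℕ) [NeZero n]
    (C : Matrix (Fin 2) (Fin 2) ℂ)
    (k : ℕ) :
    ∀ c d : Fin 2,
      ((movingShift n * coinAtOrigin n C) ^ (k * n)) ((0 : ZMod n), c) ((0 : ZMod n), d)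
        = (C ^ k) c d := by
  intro c d
  have hcol :=
    congrFun (walk_pow_mul_self_mulVec_ballistic_zero (n := n) C k (Pi.single d 1)) (0, c)
  rwa [ballistic_zero_single, ballistic_zero_apply_zero, mulVec_single_one, col_apply,
    mulVec_single_one, col_apply] at hcol

/-- For the `[C:1, I₂:n−1]` quantum walk on `C_n` with moving shift, the `2×2` block of
`(U^{MS})^{kn}` at position `(0,0)` equals `C^k`. -/
theorem stmt_14 (n : ℕ) [NeZero n] (hn : 2 ≤ n)
    (C : Matrix (Fin 2) (Fin 2) ℂ) (hC : C ∈ Matrix.unitaryGroup (Fin 2) ℂ)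
    (k : ℕ) (hk : 0 < k) :
    ∀ c d : Fin 2,
      ((movingShift n * coinAtOrigin n C) ^ (k * n)) ((0 : ZMod n), c) ((0 : ZMod n), d)
        = (C ^ k) c d :=
  stmt_14_general n C k
end

section
/- For the [C:1, I₂:n−1] quantum walk on the cycle C_n with moving shift, where C ∈ U(2) has eigenvalues exp(2πi L₁/M₁) and exp(2πi L₂/M₂) in lowest terms and C is not diagonal in the chirality basis, the period of U^{MS} is exactly M·n, where M = lcm(M₁, M₂). In particular, (U^{MS})^{Mn} = I and no smaller positive power of U^{MS} equals the identity. -/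
open Polynomial

/-!
In the relabelling `(i, L) ↦ i`, `(i, R) ↦ -i` both chiralities move one step down the cycle, so
`U^{MS}` becomes a cyclic shift of `2 × 2` blocks carrying the coin `C` at the single site `0`.
After `m ≤ n` steps a walker has crossed site `0` at most once, and exactly once when `m = n`;
hence `U^n = I ⊗ C`, while for `0 < r < n` the power `U^r` is not even block diagonal. So
`U^t = I` iff `n ∣ t` and `C^{t/n} = I`, i.e. `ord U = n · ord C`. Unitarity makes the two
eigenvalues of a non-diagonal `C` distinct, so `C` is annihilated by `X^k - 1` exactly when both
eigenvalues are `k`-th roots of unity, and `ord C = lcm(M₁, M₂)`.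
-/

theorem Complex.isPrimitiveRoot_exp_int_div {L : ℤ} {M : ℕ} (hM : 0 < M) (hLM : L.gcd M = 1) :
    IsPrimitiveRoot (Complex.exp (2 * Real.pi * Complex.I * L / M)) M := by
  rw [mul_div_assoc]
  exact Complex.isPrimitiveRoot_exp_of_isCoprime L M hM.ne' (Int.isCoprime_iff_gcd_eq_one.mpr hLM)

theorem orderOf_eq_of_pow_eq_one_iff {G : Type*} [Monoid G] {x : G} {m : ℕ}
    (h : ∀ k, x ^ k = 1 ↔ m ∣ k) : orderOf x = m :=
  Nat.dvd_right_iff_eq.mp fun k => orderOf_dvd_iff_pow_eq_one.trans (h k)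

theorem pow_mod_eq_pow_mul_sub_div {G : Type*} [Monoid G] {x : G} {t : ℕ} (ht : x ^ t = 1)
    {n : ℕ} (hn : 0 < n) : x ^ (t % n) = x ^ (n * (t - t / n)) := by
  have hexp : t % n + t * (n - 1) = n * (t - t / n) := by
    have := Nat.div_add_mod t n
    zify [Nat.div_le_self t n, hn] at this ⊢
    linear_combination this
  rw [← hexp, pow_add, pow_mul, ht, one_pow, mul_one]

namespace Matrix

section TwoEigenvalues

variable {ι K : Type*} [Fintype ι] [DecidableEq ι] [Field K]

theorem pow_eq_one_of_isRoot_charpoly {A : Matrix ι ι K} {k : ℕ} (hA : A ^ k = 1) {μ : K}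
    (hμ : A.charpoly.IsRoot μ) : μ ^ k = 1 := by
  have hσ := mem_spectrum_iff_isRoot_charpoly.mpr hμ
  have : Nontrivial (Matrix ι ι K) := by
    by_contra h
    rw [not_nontrivial_iff_subsingleton] at h
    simp [spectrum.of_subsingleton] at hσ
  simpa [hA, spectrum.one_eq] using spectrum.pow_mem_pow A k hσ

theorem pow_eq_one_iff_of_charpoly_eq {A : Matrix ι ι K} {a b : K} (hab : a ≠ b)
    (hA : A.charpoly = (X - C a) * (X - C b)) (k : ℕ) :
    A ^ k = 1 ↔ a ^ k = 1 ∧ b ^ k = 1 := by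
  refine ⟨fun h => ⟨pow_eq_one_of_isRoot_charpoly h (by simp [hA]),
    pow_eq_one_of_isRoot_charpoly h (by simp [hA])⟩, fun ⟨ha, hb⟩ => ?_⟩
  have hdvd : A.charpoly ∣ X ^ k - 1 := by
    rw [hA]
    exact (isCoprime_X_sub_C_of_isUnit_sub (sub_ne_zero.mpr hab).isUnit).mul_dvd
      (dvd_iff_isRoot.mpr (by simp [ha])) (dvd_iff_isRoot.mpr (by simp [hb]))
  simpa [sub_eq_zero] using aeval_eq_zero_of_dvd_aeval_eq_zero hdvd (aeval_self_charpoly A)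

theorem orderOf_eq_lcm_of_charpoly_eq {A : Matrix ι ι K} {a b : K} (hab : a ≠ b)
    (hA : A.charpoly = (X - C a) * (X - C b)) {M₁ M₂ : ℕ} (ha : IsPrimitiveRoot a M₁)
    (hb : IsPrimitiveRoot b M₂) : orderOf A = Nat.lcm M₁ M₂ :=
  orderOf_eq_of_pow_eq_one_iff fun k => by
    rw [pow_eq_one_iff_of_charpoly_eq hab hA, ha.pow_eq_one_iff_dvd, hb.pow_eq_one_iff_dvd,
      Nat.lcm_dvd_iff]

end TwoEigenvalues

theorem trace_eq_add_of_charpoly_eq {R : Type*} [CommRing R] [Nontrivial R]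
    {A : Matrix (Fin 2) (Fin 2) R} {a b : R} (hA : A.charpoly = (X - C a) * (X - C b)) :
    A.trace = a + b := by
  have := congrArg (coeff · 1) hA
  simp [charpoly_fin_two, coeff_C, mul_sub, sub_mul, coeff_mul_C, ← pow_two] at this
  linear_combination -this

theorem eq_smul_one_of_mem_unitaryGroup_of_trace_eq {U : Matrix (Fin 2) (Fin 2) ℂ}
    (hU : U ∈ unitaryGroup (Fin 2) ℂ) {μ : ℂ} (hμ : ‖μ‖ = 1) (htr : U.trace = 2 * μ) :
    U = μ • 1 := by
  have hcol := mem_unitaryGroup_iff'.mp hU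
  have h00 := congrFun₂ hcol 0 0
  have h11 := congrFun₂ hcol 1 1
  simp only [mul_apply, Fin.sum_univ_two, star_apply, one_apply_eq, RCLike.star_def] at h00 h11
  rw [trace_fin_two] at htr
  have htr' := congrArg (starRingEnd ℂ) htr
  simp only [map_add, map_mul, map_ofNat] at htr'
  have hμ' : μ * starRingEnd ℂ μ = 1 := by
    rw [Complex.mul_conj, Complex.normSq_eq_norm_sq, hμ]
    simp
  -- `‖U - μ • 1‖² = ‖U‖² - 2 Re (μ̄ tr U) + 2 |μ|² = 2 - 4 + 2` in the Frobenius norm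
  have hsum : ∑ i, ∑ j, Complex.normSq ((U - μ • 1) i j) = 0 := by
    apply Complex.ofReal_injective
    simp only [Fin.sum_univ_two, sub_apply, smul_apply, one_apply_eq, one_apply_ne zero_ne_one,
      one_apply_ne one_ne_zero, smul_eq_mul, mul_one, mul_zero, sub_zero]
    push_cast
    simp only [← Complex.mul_conj, map_sub]
    linear_combination h00 + h11 - starRingEnd ℂ μ * htr - μ * htr' - 2 * hμ'
  have hnn : ∀ i j, 0 ≤ Complex.normSq ((U - μ • 1) i j) := fun _ _ => Complex.normSq_nonneg _
  ext i j
  have hi := (Finset.sum_eq_zero_iff_of_nonneg fun i _ => Finset.sum_nonneg fun j _ => hnn i j).mp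
    hsum i (Finset.mem_univ _)
  have hij := (Finset.sum_eq_zero_iff_of_nonneg fun j _ => hnn i j).mp hi j (Finset.mem_univ _)
  rwa [Complex.normSq_eq_zero, sub_apply, sub_eq_zero] at hij

end Matrix

namespace CycleWalk

open Matrix

variable (n : ℕ)

def cycleShift (R : Type*) [Semiring R] : Matrix (ZMod n) (ZMod n) R :=
  of fun k j => if j = k + 1 then 1 else 0

def coinAtZero {R : Type*} [Semiring R] (A : R) : Matrix (ZMod n) (ZMod n) R :=
  diagonal fun j => if j = 0 then A else 1

def chiralityReflection : Equiv.Perm (ZMod n × Fin 2) :=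
  Equiv.prodCongrLeft fun c => if c = 1 then Equiv.neg _ else Equiv.refl _

variable [NeZero n] {R : Type*} [Semiring R]

def coinedShift (A : R) : Matrix (ZMod n) (ZMod n) R :=
  cycleShift n R * coinAtZero n A

variable {n}

theorem coinedShift_apply (A : R) (k j : ZMod n) :
    coinedShift n A k j = if j = k + 1 then (if j = 0 then A else 1) else 0 := by
  simp only [coinedShift, cycleShift, coinAtZero, mul_diagonal, of_apply, ite_mul, one_mul,
    zero_mul]

/-- Column `j` is carried to `j - m`, meeting the coin exactly when
`0 ∈ {j, j - 1, …, j - m + 1}`. -/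
theorem coinedShift_pow_apply (A : R) {m : ℕ} (hm : m ≤ n) (k j : ZMod n) :
    (coinedShift n A ^ m) k j = if j = k + m then (if j.val < m then A else 1) else 0 := by
  induction m generalizing k with
  | zero => simp [one_apply, eq_comm]
  | succ m ih =>
    rw [pow_succ', mul_apply]
    simp only [coinedShift_apply, ite_mul, zero_mul, Finset.sum_ite_eq', Finset.mem_univ,
      if_true, ih (by omega)]
    have hcast : k + 1 + (m : ZMod n) = k + ((m + 1 : ℕ) : ZMod n) := by push_cast; ring
    rw [hcast]
    by_cases hj : j = k + ((m + 1 : ℕ) : ZMod n)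
    · have hk : k + 1 = 0 ↔ j.val = m := by
        rw [← ZMod.val_natCast_of_lt (show m < n by omega), (ZMod.val_injective n).eq_iff, hj]
        push_cast
        constructor <;> intro h <;> linear_combination h
      simp only [if_pos hj]
      by_cases hv : j.val = m
      · simp [hk.mpr hv, hv]
      · have hlt : j.val < m + 1 ↔ j.val < m := by omega
        simp [mt hk.mp hv, hlt]
    · simp only [if_neg hj, mul_zero, ite_self]

theorem coinedShift_pow_self (A : R) : coinedShift n A ^ n = diagonal fun _ => A := by
  ext k j
  rw [coinedShift_pow_apply A le_rfl, ZMod.natCast_self, add_zero, diagonal_apply]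
  simp [ZMod.val_lt, eq_comm]

theorem coinedShift_pow_mul_self (A : R) (q : ℕ) :
    coinedShift n A ^ (n * q) = diagonal fun _ => A ^ q := by
  rw [pow_mul, coinedShift_pow_self, diagonal_pow]
  rfl

theorem coinedShift_pow_ne_diagonal [Nontrivial R] (A : R) {r : ℕ} (hr₀ : 0 < r) (hr : r < n)
    (d : ZMod n → R) : coinedShift n A ^ r ≠ diagonal d := by
  intro h
  have hr' : (r : ZMod n) ≠ 0 := by
    rw [Ne, ZMod.natCast_eq_zero_iff]
    exact Nat.not_dvd_of_pos_of_lt hr₀ hr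
  have := congrFun₂ h 0 r
  rw [coinedShift_pow_apply A hr.le, zero_add, if_pos rfl, ZMod.val_natCast_of_lt hr,
    if_neg (lt_irrefl r), diagonal_apply_ne _ hr'.symm] at this
  exact one_ne_zero this

theorem coinedShift_pow_eq_one_iff [Nontrivial R] (A : R) (t : ℕ) :
    coinedShift n A ^ t = 1 ↔ n ∣ t ∧ A ^ (t / n) = 1 := by
  have hn : 0 < n := Nat.pos_of_neZero n
  constructor
  · intro h
    have hdvd : n ∣ t := by
      by_contra hnd
      have hmod := pow_mod_eq_pow_mul_sub_div h hn
      rw [coinedShift_pow_mul_self] at hmod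
      exact coinedShift_pow_ne_diagonal A (Nat.pos_of_ne_zero (mt Nat.dvd_of_mod_eq_zero hnd))
        (Nat.mod_lt t hn) _ hmod
    obtain ⟨q, rfl⟩ := hdvd
    rw [coinedShift_pow_mul_self, ← diagonal_one] at h
    rw [Nat.mul_div_cancel_left q hn]
    exact ⟨dvd_mul_right n q, congrFun (diagonal_injective h) 0⟩
  · rintro ⟨⟨q, rfl⟩, hq⟩
    rw [Nat.mul_div_cancel_left q hn] at hq
    rw [coinedShift_pow_mul_self, hq, diagonal_one]

theorem orderOf_coinedShift [Nontrivial R] (A : R) :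
    orderOf (coinedShift n A) = n * orderOf A :=
  orderOf_eq_of_pow_eq_one_iff fun t => by
    rw [coinedShift_pow_eq_one_iff, ← orderOf_dvd_iff_pow_eq_one]
    exact ⟨fun ⟨hn, hA⟩ => (Nat.dvd_div_iff_mul_dvd hn).mp hA,
      fun h => ⟨dvd_of_mul_right_dvd h, (Nat.dvd_div_iff_mul_dvd (dvd_of_mul_right_dvd h)).mpr h⟩⟩

variable (n)

def blockEquiv : Matrix (ZMod n) (ZMod n) (Matrix (Fin 2) (Fin 2) ℂ) ≃+*
    Matrix (ZMod n × Fin 2) (ZMod n × Fin 2) ℂ :=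
  (compRingEquiv (ZMod n) (Fin 2) ℂ).trans (reindexRingEquiv (R := ℂ) (chiralityReflection n).symm)

variable {n}

theorem blockEquiv_cycleShift : blockEquiv n (cycleShift n _) = movingShift n := by
  ext ⟨i, a⟩ ⟨j, b⟩
  fin_cases a <;> fin_cases b <;> simp [blockEquiv, chiralityReflection, cycleShift, movingShift]
  all_goals split_ifs <;> (try simp) <;> grind

theorem blockEquiv_coinAtZero (C : Matrix (Fin 2) (Fin 2) ℂ) :
    blockEquiv n (coinAtZero n C) = coinAtOrigin n C := by
  ext ⟨i, a⟩ ⟨j, b⟩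
  fin_cases a <;> fin_cases b <;>
    simp [blockEquiv, chiralityReflection, coinAtZero, coinAtOrigin, diagonal_apply]
  all_goals split_ifs <;> (try simp) <;> grind

end CycleWalk

open CycleWalk in
theorem orderOf_movingShift_mul_coinAtOrigin {n : ℕ} [NeZero n] (C : Matrix (Fin 2) (Fin 2) ℂ) :
    orderOf (movingShift n * coinAtOrigin n C) = n * orderOf C := by
  rw [← blockEquiv_cycleShift, ← blockEquiv_coinAtZero, ← map_mul]
  exact (MulEquiv.orderOf_eq (blockEquiv n).toMulEquiv _).trans (orderOf_coinedShift C)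

theorem stmt_16_general (n : ℕ) [NeZero n]
    (C : Matrix (Fin 2) (Fin 2) ℂ) (hC : C ∈ Matrix.unitaryGroup (Fin 2) ℂ)
    (L₁ L₂ : ℤ) (M₁ M₂ : ℕ) (hM₁ : 0 < M₁) (hM₂ : 0 < M₂)
    (hcop₁ : Int.gcd L₁ (M₁ : ℤ) = 1) (hcop₂ : Int.gcd L₂ (M₂ : ℤ) = 1)
    (lam₁ lam₂ : ℂ)
    (hlam₁ : lam₁ = Complex.exp (2 * Real.pi * Complex.I * L₁ / M₁))
    (hlam₂ : lam₂ = Complex.exp (2 * Real.pi * Complex.I * L₂ / M₂))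
    (hspec : C.charpoly = (X - Polynomial.C lam₁) * (X - Polynomial.C lam₂))
    (hnondiag : ¬ (C 0 1 = 0 ∧ C 1 0 = 0)) :
    (movingShift n * coinAtOrigin n C) ^ (Nat.lcm M₁ M₂ * n) = 1 ∧
      ∀ t : ℕ, 0 < t → t < Nat.lcm M₁ M₂ * n →
        (movingShift n * coinAtOrigin n C) ^ t ≠ 1 := by
  have hζ₁ : IsPrimitiveRoot lam₁ M₁ := hlam₁ ▸ Complex.isPrimitiveRoot_exp_int_div hM₁ hcop₁
  have hζ₂ : IsPrimitiveRoot lam₂ M₂ := hlam₂ ▸ Complex.isPrimitiveRoot_exp_int_div hM₂ hcop₂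
  have hne : lam₁ ≠ lam₂ := by
    rintro rfl
    have hscalar := Matrix.eq_smul_one_of_mem_unitaryGroup_of_trace_eq hC
      (hζ₁.norm'_eq_one hM₁.ne') (by rw [Matrix.trace_eq_add_of_charpoly_eq hspec, two_mul])
    exact hnondiag ⟨by simp [hscalar], by simp [hscalar]⟩
  have hU : orderOf (movingShift n * coinAtOrigin n C) = Nat.lcm M₁ M₂ * n := by
    rw [orderOf_movingShift_mul_coinAtOrigin,
      Matrix.orderOf_eq_lcm_of_charpoly_eq hne hspec hζ₁ hζ₂, mul_comm]
  exact ⟨hU ▸ pow_orderOf_eq_one _, fun t ht htlt => pow_ne_one_of_lt_orderOf ht.ne' (hU ▸ htlt)⟩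

/-- For the `[C:1, I₂:n−1]` quantum walk on `C_n` with moving shift, where `C ∈ U(2)` has
eigenvalues `exp(2πi L₁/M₁)`, `exp(2πi L₂/M₂)` in lowest terms and `C` is not diagonal in
the chirality basis, the period of `U^{MS}` is exactly `M·n` with `M = lcm(M₁, M₂)`. -/
theorem stmt_16 (n : ℕ) [NeZero n] (hn : 2 ≤ n)
    (C : Matrix (Fin 2) (Fin 2) ℂ) (hC : C ∈ Matrix.unitaryGroup (Fin 2) ℂ)
    (L₁ L₂ : ℤ) (M₁ M₂ : ℕ) (hM₁ : 0 < M₁) (hM₂ : 0 < M₂)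
    (hcop₁ : Int.gcd L₁ (M₁ : ℤ) = 1) (hcop₂ : Int.gcd L₂ (M₂ : ℤ) = 1)
    (lam₁ lam₂ : ℂ)
    (hlam₁ : lam₁ = Complex.exp (2 * Real.pi * Complex.I * L₁ / M₁))
    (hlam₂ : lam₂ = Complex.exp (2 * Real.pi * Complex.I * L₂ / M₂))
    (hspec : C.charpoly = (X - Polynomial.C lam₁) * (X - Polynomial.C lam₂))
    (hnondiag : ¬ (C 0 1 = 0 ∧ C 1 0 = 0)) :
    (movingShift n * coinAtOrigin n C) ^ (Nat.lcm M₁ M₂ * n) = 1 ∧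
      ∀ t : ℕ, 0 < t → t < Nat.lcm M₁ M₂ * n →
        (movingShift n * coinAtOrigin n C) ^ t ≠ 1 :=
  stmt_16_general n C hC L₁ L₂ M₁ M₂ hM₁ hM₂ hcop₁ hcop₂ lam₁ lam₂ hlam₁ hlam₂ hspec hnondiag
end
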